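/- In the setup below, suppose h² ≠ 0 and let γ(α) and α_max be defined from h². Define φ_N := inf{ ‖w‖₁ : w ∈ ℝ^d, (⟨w_S^⊥, h¹⟩ + ⟨w_{S^c}^⊥, h²⟩)²/n ≥ f_n(⟨w, w*⟩, ‖w^⊥‖₂) and ⟨w_S^⊥, h¹⟩ + ⟨w_{S^c}^⊥, h²⟩ ≥ 0 }. Then, for every realization of (g¹, g², h¹, h²) with h² ≠ 0: φ_N ≤ inf{ |ν|·‖w*‖₁ + b·α : ν ∈ ℝ, b ≥ 0, α ∈ [1, α_max], (1/n)·b²·‖h²‖_∞² ≥ f_n(ν, b·‖γ(α)‖₂) }, with the convention that the infimum over the empty set is +∞ (here b·α = b·‖γ(α)‖₁ since γ(α) is nonnegative with coordinate sum α). -/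

import Mathlib

open MeasureTheory ProbabilityTheory

/-- The sign function: `1` if `t ≥ 0` and `-1` otherwise. -/
noncomputable def sgn (t : ℝ) : ℝ := if 0 ≤ t then 1 else -1

/-- The Euclidean inner product on `Fin k → ℝ`. -/
def ip {k : ℕ} (a b : Fin k → ℝ) : ℝ := ∑ i, a i * b i

/-- The ℓ1 norm on `Fin k → ℝ`. -/
noncomputable def l1 {k : ℕ} (a : Fin k → ℝ) : ℝ := ∑ i, |a i|

/-- The ℓ2 norm on `Fin k → ℝ`. -/
noncomputable def l2 {k : ℕ} (a : Fin k → ℝ) : ℝ := Real.sqrt (∑ i, (a i) ^ 2)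

/-- The ℓ∞ norm on `Fin k → ℝ` (as a supremum over coordinates). -/
noncomputable def linf {k : ℕ} (a : Fin k → ℝ) : ℝ := ⨆ i, |a i|

/-- The empirical auxiliary function
`f_n(ν, η) = (1/n) Σ_i (1 - ξ_i ν |g¹_i| - g²_i η)₊²`. -/
noncomputable def fn (n : ℕ) (ξ g1 g2 : Fin n → ℝ) (ν η : ℝ) : ℝ :=
  (1 / (n : ℝ)) * ∑ i, (max (1 - ξ i * ν * |g1 i| - g2 i * η) 0) ^ 2

/-- The `k`-fold product of the standard Gaussian measure `N(0,1)` on `ℝ`. -/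
noncomputable def stdGauss (k : ℕ) : Measure (Fin k → ℝ) :=
  Measure.pi fun _ : Fin k => gaussianReal 0 1

/-- The joint law of the independent auxiliary Gaussian vectors `(g¹, g², h¹, h²)`. -/
noncomputable def auxGauss (n s r : ℕ) :
    Measure ((Fin n → ℝ) × (Fin n → ℝ) × (Fin s → ℝ) × (Fin r → ℝ)) :=
  (stdGauss n).prod ((stdGauss n).prod ((stdGauss s).prod (stdGauss r)))

/-- The constraint set
`K_α = {w : ⟨w, |h|⟩ ≥ ‖h‖_∞, w_j ≥ 0 for all j, Σ_j w_j = α}`. -/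
noncomputable def Kset (m : ℕ) (h : Fin m → ℝ) (α : ℝ) : Set (Fin m → ℝ) :=
  {w | linf h ≤ (∑ j, w j * |h j|) ∧ (∀ j, 0 ≤ w j) ∧ (∑ j, w j) = α}

/-- `γ : α ↦ γ(α)` is the path of minimizers: for every `α ≥ 1`, `γ(α)` minimizes
`w ↦ ‖w‖₂²` over `K_α` (this minimizer is unique, so this characterizes `γ`). -/
def IsGammaPath (m : ℕ) (h : Fin m → ℝ) (γ : ℝ → Fin m → ℝ) : Prop :=
  ∀ α : ℝ, 1 ≤ α → γ α ∈ Kset m h α ∧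
    ∀ w ∈ Kset m h α, (∑ j, (γ α j) ^ 2) ≤ ∑ j, (w j) ^ 2

/-- `α_max := m ‖h‖_∞ / ‖h‖₁`. -/
noncomputable def alphaMax (m : ℕ) (h : Fin m → ℝ) : ℝ := m * linf h / l1 h

/-!
Each feasible `(ν, b, α)` on the right yields the feasible vector
`w = ν w* + (0, b γ(α) ⊙ sgn h²)` on the left, with `‖w‖₁ = |ν| ‖w*‖₁ + b α`.
Because `w*` is a unit vector supported on the first `s` coordinates, `⟨w, w*⟩ = ν` and
`w^⊥ = (0, b γ(α) ⊙ sgn h²)`; hence `‖w^⊥‖₂ = b ‖γ(α)‖₂`, and the pairing of `w^⊥` with `(h¹, h²)`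
is `b ⟨γ(α), |h²|⟩ ≥ b ‖h²‖_∞ ≥ 0`, which makes both constraints on `w` follow from the one on
`(ν, b, α)`.
-/

lemma sgn_mul_self (t : ℝ) : sgn t * t = |t| := by
  unfold sgn
  split_ifs with h
  · rw [one_mul, abs_of_nonneg h]
  · rw [abs_of_neg (not_le.mp h), neg_one_mul]

lemma abs_sgn (t : ℝ) : |sgn t| = 1 := by
  unfold sgn; split_ifs <;> simp

lemma sq_sgn (t : ℝ) : sgn t ^ 2 = 1 := by
  unfold sgn; split_ifs <;> simp

lemma linf_nonneg {k : ℕ} (a : Fin k → ℝ) : 0 ≤ linf a :=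
  Real.iSup_nonneg fun i => abs_nonneg (a i)

lemma ip_self {k : ℕ} (a : Fin k → ℝ) : ip a a = l2 a ^ 2 := by
  rw [l2, Real.sq_sqrt (Finset.sum_nonneg fun i _ => sq_nonneg (a i))]
  exact Finset.sum_congr rfl fun i _ => (sq (a i)).symm

section SignedVector

variable {m : ℕ} (u h : Fin m → ℝ)

lemma ip_mul_sgn : ip (fun j => u j * sgn (h j)) h = ∑ j, u j * |h j| := by
  simp only [ip, mul_assoc, sgn_mul_self]

lemma l1_mul_sgn : l1 (fun j => u j * sgn (h j)) = l1 u := by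
  simp only [l1, abs_mul, abs_sgn, mul_one]

lemma l2_mul_sgn : l2 (fun j => u j * sgn (h j)) = l2 u := by
  simp only [l2, mul_pow, sq_sgn, mul_one]

end SignedVector

lemma l1_smul {k : ℕ} (c : ℝ) (a : Fin k → ℝ) : l1 (c • a) = |c| * l1 a := by
  simp only [l1, Pi.smul_apply, smul_eq_mul, abs_mul, Finset.mul_sum]

lemma l2_smul {k : ℕ} (c : ℝ) (a : Fin k → ℝ) : l2 (c • a) = |c| * l2 a := by
  simp only [l2, Pi.smul_apply, smul_eq_mul, mul_pow, ← Finset.mul_sum]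
  rw [Real.sqrt_mul (sq_nonneg c), Real.sqrt_sq_eq_abs]

def tailEmbed (d s : ℕ) (v : Fin (d - s) → ℝ) (i : Fin d) : ℝ :=
  if h : s ≤ i.1 then v ⟨i.1 - s, by omega⟩ else 0

section TailEmbed

variable {d s : ℕ} (v : Fin (d - s) → ℝ)

lemma tailEmbed_of_lt {i : Fin d} (hi : i.1 < s) : tailEmbed d s v i = 0 :=
  dif_neg (not_le.mpr hi)

lemma tailEmbed_of_val_eq {i : Fin d} {j : Fin (d - s)} (hij : i.1 = s + j.1) :
    tailEmbed d s v i = v j := by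
  rw [tailEmbed, dif_pos (by omega)]
  exact congrArg v (Fin.ext (by simp only [hij, Nat.add_sub_cancel_left]))

lemma sum_comp_tailEmbed (hsd : s ≤ d) {F : ℝ → ℝ} (hF : F 0 = 0) :
    ∑ i, F (tailEmbed d s v i) = ∑ j, F (v j) := by
  rw [← Fin.sum_congr' _ (Nat.add_sub_of_le hsd), Fin.sum_univ_add]
  simp only [Fin.val_cast, Fin.val_castAdd, Fin.is_lt, tailEmbed_of_lt, hF, Finset.sum_const_zero,
    zero_add]
  exact Finset.sum_congr rfl fun j _ => by rw [tailEmbed_of_val_eq v rfl]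

lemma l2_tailEmbed (hsd : s ≤ d) : l2 (tailEmbed d s v) = l2 v := by
  rw [l2, l2, sum_comp_tailEmbed v hsd (F := (· ^ 2)) (zero_pow two_ne_zero)]

lemma sum_block_mul_tailEmbed (hsd : s ≤ d) (a : Fin s → ℝ) (c : Fin (d - s) → ℝ) :
    (∑ j : Fin s, tailEmbed d s v ⟨j.1, Nat.lt_of_lt_of_le j.2 hsd⟩ * a j) +
      ∑ j : Fin (d - s), tailEmbed d s v ⟨s + j.1, by omega⟩ * c j = ip v c := by
  simp only [Fin.is_lt, tailEmbed_of_lt, zero_mul, Finset.sum_const_zero, zero_add]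
  exact Finset.sum_congr rfl fun j _ => by rw [tailEmbed_of_val_eq v rfl]

variable {x : Fin d → ℝ} (hx : ∀ i : Fin d, s ≤ i.1 → x i = 0) (ν : ℝ)
include hx

lemma tailEmbed_mul_eq_zero (i : Fin d) : tailEmbed d s v i * x i = 0 := by
  rcases lt_or_ge i.1 s with hi | hi
  · rw [tailEmbed_of_lt v hi, zero_mul]
  · rw [hx i hi, mul_zero]

lemma ip_mul_add_tailEmbed (hx1 : l2 x = 1) :
    ip (fun i => ν * x i + tailEmbed d s v i) x = ν := by
  simp only [ip, add_mul, tailEmbed_mul_eq_zero v hx, add_zero, mul_assoc, ← Finset.mul_sum]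
  rw [← ip, ip_self, hx1, one_pow, mul_one]

lemma l1_mul_add_tailEmbed (hsd : s ≤ d) :
    l1 (fun i => ν * x i + tailEmbed d s v i) = |ν| * l1 x + l1 v := by
  have hsplit : ∀ i, |ν * x i + tailEmbed d s v i| = |ν| * |x i| + |tailEmbed d s v i| := by
    intro i
    rcases lt_or_ge i.1 s with hi | hi
    · rw [tailEmbed_of_lt v hi, add_zero, abs_zero, add_zero, abs_mul]
    · rw [hx i hi, mul_zero, zero_add, abs_zero, mul_zero, zero_add]
  simp only [l1, hsplit, Finset.sum_add_distrib, ← Finset.mul_sum]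
  rw [sum_comp_tailEmbed v hsd abs_zero]

end TailEmbed

lemma l1_of_nonneg {k : ℕ} {a : Fin k → ℝ} (ha : ∀ i, 0 ≤ a i) : l1 a = ∑ i, a i :=
  Finset.sum_congr rfl fun i _ => abs_of_nonneg (ha i)

theorem stmt11 (n d s : ℕ) (hs2 : s ≤ d - 1)
    (wstar : Fin d → ℝ) (hwstar : l2 wstar = 1)
    (hsupp : ∀ i : Fin d, s ≤ i.1 → wstar i = 0)
    (ξ : Fin n → ℝ)
    (g1 g2 : Fin n → ℝ) (h1 : Fin s → ℝ) (h2 : Fin (d - s) → ℝ)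
    (γ : ℝ → Fin (d - s) → ℝ) (hγ : IsGammaPath (d - s) h2 γ) :
    sInf {r : EReal | ∃ w : Fin d → ℝ,
        (fn n ξ g1 g2 (ip w wstar)
            (l2 (fun i => w i - ip w wstar * wstar i)) ≤
          ((∑ j : Fin s, (w ⟨j.1, by have := j.2; omega⟩ -
                ip w wstar * wstar ⟨j.1, by have := j.2; omega⟩) * h1 j) +
           (∑ j : Fin (d - s), (w ⟨s + j.1, by have := j.2; omega⟩ -
                ip w wstar * wstar ⟨s + j.1, by have := j.2; omega⟩) * h2 j)) ^ 2
            / (n : ℝ)) ∧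
        (0 ≤ (∑ j : Fin s, (w ⟨j.1, by have := j.2; omega⟩ -
                ip w wstar * wstar ⟨j.1, by have := j.2; omega⟩) * h1 j) +
             (∑ j : Fin (d - s), (w ⟨s + j.1, by have := j.2; omega⟩ -
                ip w wstar * wstar ⟨s + j.1, by have := j.2; omega⟩) * h2 j)) ∧
        r = (l1 w : EReal)}
    ≤ sInf {r : EReal | ∃ ν b α : ℝ, 0 ≤ b ∧ 1 ≤ α ∧ α ≤ alphaMax (d - s) h2 ∧
        fn n ξ g1 g2 ν (b * l2 (γ α)) ≤ 1 / (n : ℝ) * b ^ 2 * (linf h2) ^ 2 ∧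
        r = ((|ν| * l1 wstar + b * α : ℝ) : EReal)} := by
  apply sInf_le_sInf
  rintro _ ⟨ν, b, α, hb, hα, -, hfn, rfl⟩
  obtain ⟨⟨hγh, hγ0, hγα⟩, -⟩ := hγ α hα
  have hsd : s ≤ d := hs2.trans (Nat.sub_le d 1)
  set v : Fin (d - s) → ℝ := fun j => (b • γ α) j * sgn (h2 j)
  have hip : ip (fun i => ν * wstar i + tailEmbed d s v i) wstar = ν :=
    ip_mul_add_tailEmbed v hsupp ν hwstar
  have hl2 : l2 v = b * l2 (γ α) := by rw [l2_mul_sgn, l2_smul, abs_of_nonneg hb]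
  have hl1 : l1 v = b * α := by
    rw [l1_mul_sgn, l1_smul, abs_of_nonneg hb, l1_of_nonneg hγ0, hγα]
  have hpair : ip v h2 = b * ∑ j, γ α j * |h2 j| := by
    rw [ip_mul_sgn]
    simp only [Pi.smul_apply, smul_eq_mul, mul_assoc, ← Finset.mul_sum]
  have hpair_ge : b * linf h2 ≤ ip v h2 := hpair ▸ mul_le_mul_of_nonneg_left hγh hb
  have hpair_nonneg : 0 ≤ b * linf h2 := mul_nonneg hb (linf_nonneg h2)
  refine ⟨fun i => ν * wstar i + tailEmbed d s v i, ?_, ?_, ?_⟩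
  · simp only [hip, add_sub_cancel_left]
    rw [sum_block_mul_tailEmbed v hsd, l2_tailEmbed v hsd, hl2]
    calc fn n ξ g1 g2 ν (b * l2 (γ α)) ≤ 1 / (n : ℝ) * b ^ 2 * linf h2 ^ 2 := hfn
      _ = (b * linf h2) ^ 2 / n := by ring
      _ ≤ ip v h2 ^ 2 / n := by gcongr
  · simp only [hip, add_sub_cancel_left]
    rw [sum_block_mul_tailEmbed v hsd]
    exact hpair_nonneg.trans hpair_ge
  · rw [l1_mul_add_tailEmbed v hsupp ν hsd, hl1]
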